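/- Let X_1, X_2, Y_1, Y_2, A be pairwise disjoint finite sets of indeterminates with |X_1| = |Y_1| + |A| and |Y_2| = |X_2| + |A|, and let 1 ≤ k ≤ |X_1|. In the polynomial ring ℂ[X_1 ⊔ X_2 ⊔ Y_1 ⊔ Y_2 ⊔ A], the ideal generated by {e_a(Y_1 ⊔ A) − e_a(X_1) : 1 ≤ a ≤ |X_1|} ∪ {e_b(Y_2) − e_b(X_2 ⊔ A) : 1 ≤ b ≤ |Y_2|} is equal to the ideal generated by {e_a(X_1 ⊔ X_2) − e_a(Y_1 ⊔ Y_2) : 1 ≤ a ≤ k} ∪ {e_a(Y_1 ⊔ A) − e_a(X_1) : k < a ≤ |X_1|} ∪ {e_b(Y_2) − e_b(X_2 ⊔ A) : 1 ≤ b ≤ |Y_2|}. (This is the ideal-level content of the row operations replacing the first k positive entries of the Koszul matrix factorization of a resolved crossing by the defining relations of the ring 𝒱.) -/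

import Mathlib

/-!
Write `E_U(t) = esymGen U = ∏_{u ∈ U} (1 + u t) = ∑_j e_j(U) t^j`. The generators are the
coefficients of `u = E_{Y₁} E_A - E_{X₁}`, `v = E_{Y₂} - E_{X₂} E_A` and
`w = E_{X₁} E_{X₂} - E_{Y₁} E_{Y₂}`, and expanding shows `w + E_{X₂} u + E_{Y₁} v = 0`. So every
coefficient of `w` lies in the ideal generated by those of `u` and `v`. Conversely, `E_{X₂}` has
constant term `1`, so the coefficient of `t^a` in this relation expresses `u_a` through `w_a`, the
`v_b` and the `u_b` with `b < a`; by induction on `a`, the generators `u_1, …, u_k` may be traded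
for `w_1, …, w_k`.
-/

open MvPolynomial

set_option synthInstance.maxHeartbeats 400000
set_option maxHeartbeats 1000000

noncomputable section

/-- The `j`-th elementary symmetric polynomial `e_j(U)` in the set of variables `U`,
with `e_0(U) = 1` and `e_j(U) = 0` for `j > |U|`. -/
def esymF {V : Type} [DecidableEq V] (U : Finset V) (j : ℕ) : MvPolynomial V ℂ :=
  ∑ t ∈ U.powersetCard j, ∏ v ∈ t, X v

/-- The variable set `X_1 ⊔ X_2 ⊔ Y_1 ⊔ Y_2 ⊔ A`. -/
abbrev V9 (n1 n2 m1 m2 c : ℕ) : Type := Fin n1 ⊕ Fin n2 ⊕ Fin m1 ⊕ Fin m2 ⊕ Fin c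

/-- The alphabet `X_1`. -/
def FX1 (n1 n2 m1 m2 c : ℕ) : Finset (V9 n1 n2 m1 m2 c) := Finset.univ.image Sum.inl

/-- The alphabet `X_2`. -/
def FX2 (n1 n2 m1 m2 c : ℕ) : Finset (V9 n1 n2 m1 m2 c) :=
  Finset.univ.image fun a : Fin n2 => Sum.inr (Sum.inl a)

/-- The alphabet `Y_1`. -/
def FY1 (n1 n2 m1 m2 c : ℕ) : Finset (V9 n1 n2 m1 m2 c) :=
  Finset.univ.image fun a : Fin m1 => Sum.inr (Sum.inr (Sum.inl a))

/-- The alphabet `Y_2`. -/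
def FY2 (n1 n2 m1 m2 c : ℕ) : Finset (V9 n1 n2 m1 m2 c) :=
  Finset.univ.image fun a : Fin m2 => Sum.inr (Sum.inr (Sum.inr (Sum.inl a)))

/-- The alphabet `A`. -/
def FA (n1 n2 m1 m2 c : ℕ) : Finset (V9 n1 n2 m1 m2 c) :=
  Finset.univ.image fun a : Fin c => Sum.inr (Sum.inr (Sum.inr (Sum.inr a)))

namespace Polynomial

variable {R : Type*} [CommRing R]

theorem mem_map_C_of_coeff_mem {I : Ideal R} {p : R[X]} {n : ℕ} (h0 : p.coeff 0 = 0)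
    (hvanish : ∀ a, n < a → p.coeff a = 0) (hmem : ∀ a, 1 ≤ a → a ≤ n → p.coeff a ∈ I) :
    p ∈ I.map Polynomial.C := by
  refine Ideal.mem_map_C_iff.2 fun a => ?_
  rcases Nat.eq_zero_or_pos a with rfl | ha
  · simp [h0]
  rcases le_or_gt a n with han | han
  · exact hmem a ha han
  · simp [hvanish a han]

theorem mem_map_C_of_add_mul_mem_map_C {J : Ideal R} {P U W : R[X]} (k : ℕ)
    (hP : P.coeff 0 = 1) (hWPU : W + P * U ∈ J.map Polynomial.C)
    (hW : ∀ a ≤ k, W.coeff a ∈ J) (hU : ∀ a, k < a → U.coeff a ∈ J) : U ∈ J.map Polynomial.C := by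
  rw [Ideal.mem_map_C_iff] at hWPU ⊢
  intro a
  induction a using Nat.strong_induction_on with
  | _ a ih =>
    rcases le_or_gt a k with hak | hak
    · have hsolve : U.coeff a = (W + P * U).coeff a - W.coeff a -
          ∑ i ∈ Finset.range a, P.coeff (i + 1) * U.coeff (a - (i + 1)) := by
        rw [coeff_add, coeff_mul, Finset.Nat.sum_antidiagonal_eq_sum_range_succ
          (fun i j => P.coeff i * U.coeff j), Finset.sum_range_succ', hP, Nat.sub_zero, one_mul]
        ring
      have hlower : ∑ i ∈ Finset.range a, P.coeff (i + 1) * U.coeff (a - (i + 1)) ∈ J :=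
        J.sum_mem fun i hi => J.mul_mem_left _ (ih _ (by simp at hi; omega))
      rw [hsolve]
      exact J.sub_mem (J.sub_mem (hWPU a) (hW a hak)) hlower
    · exact hU a hak

end Polynomial

section ElementarySymmetric

variable {V : Type} [DecidableEq V]

def esymGen (U : Finset V) : Polynomial (MvPolynomial V ℂ) :=
  ∏ v ∈ U, (1 + Polynomial.C (X v) * Polynomial.X)

theorem coeff_esymGen (U : Finset V) (j : ℕ) : (esymGen U).coeff j = esymF U j := by
  simp only [esymGen, Finset.prod_one_add, Finset.prod_mul_distrib, Finset.prod_const,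
    ← map_prod, Polynomial.finsetSum_coeff, Polynomial.coeff_C_mul_X_pow, esymF,
    Finset.powersetCard_eq_filter, Finset.sum_filter]
  exact Finset.sum_congr rfl fun t _ => by split_ifs <;> simp_all [eq_comm]

theorem esymGen_union {S T : Finset V} (h : Disjoint S T) :
    esymGen (S ∪ T) = esymGen S * esymGen T :=
  Finset.prod_union h

theorem esymF_zero (U : Finset V) : esymF U 0 = 1 := by
  simp [esymF]

theorem esymF_eq_zero {U : Finset V} {j : ℕ} (h : U.card < j) : esymF U j = 0 := by
  rw [esymF, Finset.powersetCard_eq_empty.2 h, Finset.sum_empty]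

theorem coeff_esymGen_sub (S T : Finset V) (a : ℕ) :
    (esymGen S - esymGen T).coeff a = esymF S a - esymF T a := by
  rw [Polynomial.coeff_sub, coeff_esymGen, coeff_esymGen]

theorem esymGen_sub_mem_map_C {K : Ideal (MvPolynomial V ℂ)} {S T : Finset V} {n : ℕ}
    (hS : S.card ≤ n) (hT : T.card ≤ n) (h : ∀ a, 1 ≤ a → a ≤ n → esymF S a - esymF T a ∈ K) :
    esymGen S - esymGen T ∈ K.map Polynomial.C := by
  refine Polynomial.mem_map_C_of_coeff_mem (n := n) ?_ (fun a ha => ?_) fun a ha1 ha => ?_ <;>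
    rw [coeff_esymGen_sub]
  · rw [esymF_zero, esymF_zero, sub_self]
  · rw [esymF_eq_zero (hS.trans_lt ha), esymF_eq_zero (hT.trans_lt ha), sub_self]
  · exact h a ha1 ha

variable {X₁ X₂ Y₁ Y₂ A : Finset V}

theorem esymGen_crossing_relation (hX : Disjoint X₁ X₂) (hY : Disjoint Y₁ Y₂)
    (hY₁A : Disjoint Y₁ A) (hX₂A : Disjoint X₂ A) :
    (esymGen (X₁ ∪ X₂) - esymGen (Y₁ ∪ Y₂)) + esymGen X₂ * (esymGen (Y₁ ∪ A) - esymGen X₁) =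
      -(esymGen Y₁ * (esymGen Y₂ - esymGen (X₂ ∪ A))) := by
  rw [esymGen_union hX, esymGen_union hY, esymGen_union hY₁A, esymGen_union hX₂A]
  ring

theorem esymF_union_sub_mem {K : Ideal (MvPolynomial V ℂ)} (hX : Disjoint X₁ X₂)
    (hY : Disjoint Y₁ Y₂) (hY₁A : Disjoint Y₁ A) (hX₂A : Disjoint X₂ A)
    (h₁ : (Y₁ ∪ A).card ≤ X₁.card) (h₂ : (X₂ ∪ A).card ≤ Y₂.card)
    (hu : ∀ a, 1 ≤ a → a ≤ X₁.card → esymF (Y₁ ∪ A) a - esymF X₁ a ∈ K)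
    (hv : ∀ b, 1 ≤ b → b ≤ Y₂.card → esymF Y₂ b - esymF (X₂ ∪ A) b ∈ K) (a : ℕ) :
    esymF (X₁ ∪ X₂) a - esymF (Y₁ ∪ Y₂) a ∈ K := by
  have hw : esymGen (X₁ ∪ X₂) - esymGen (Y₁ ∪ Y₂) ∈ K.map Polynomial.C := by
    rw [eq_sub_of_add_eq (esymGen_crossing_relation hX hY hY₁A hX₂A)]
    exact sub_mem (neg_mem (Ideal.mul_mem_left _ _ (esymGen_sub_mem_map_C le_rfl h₂ hv)))
      (Ideal.mul_mem_left _ _ (esymGen_sub_mem_map_C h₁ le_rfl hu))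
  simpa only [coeff_esymGen_sub] using Ideal.mem_map_C_iff.1 hw a

theorem esymF_sub_mem_of_low_degree {K : Ideal (MvPolynomial V ℂ)} (hX : Disjoint X₁ X₂)
    (hY : Disjoint Y₁ Y₂) (hY₁A : Disjoint Y₁ A) (hX₂A : Disjoint X₂ A)
    (h₁ : (Y₁ ∪ A).card ≤ X₁.card) (h₂ : (X₂ ∪ A).card ≤ Y₂.card) (k : ℕ)
    (hw : ∀ a, 1 ≤ a → a ≤ k → esymF (X₁ ∪ X₂) a - esymF (Y₁ ∪ Y₂) a ∈ K)
    (hu : ∀ a, k < a → a ≤ X₁.card → esymF (Y₁ ∪ A) a - esymF X₁ a ∈ K)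
    (hv : ∀ b, 1 ≤ b → b ≤ Y₂.card → esymF Y₂ b - esymF (X₂ ∪ A) b ∈ K) (a : ℕ) :
    esymF (Y₁ ∪ A) a - esymF X₁ a ∈ K := by
  have hrel : esymGen (X₁ ∪ X₂) - esymGen (Y₁ ∪ Y₂) +
      esymGen X₂ * (esymGen (Y₁ ∪ A) - esymGen X₁) ∈ K.map Polynomial.C := by
    rw [esymGen_crossing_relation hX hY hY₁A hX₂A]
    exact neg_mem (Ideal.mul_mem_left _ _ (esymGen_sub_mem_map_C le_rfl h₂ hv))
  have hu' : esymGen (Y₁ ∪ A) - esymGen X₁ ∈ K.map Polynomial.C := by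
    refine Polynomial.mem_map_C_of_add_mul_mem_map_C k ?_ hrel (fun a ha => ?_) (fun a ha => ?_)
    · rw [coeff_esymGen, esymF_zero]
    · rw [coeff_esymGen_sub]
      rcases Nat.eq_zero_or_pos a with rfl | ha0
      · rw [esymF_zero, esymF_zero, sub_self]; exact K.zero_mem
      · exact hw a ha0 ha
    · rw [coeff_esymGen_sub]
      rcases le_or_gt a X₁.card with haX | haX
      · exact hu a ha haX
      · rw [esymF_eq_zero (h₁.trans_lt haX), esymF_eq_zero haX, sub_self]; exact K.zero_mem
  simpa only [coeff_esymGen_sub] using Ideal.mem_map_C_iff.1 hu' a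

theorem span_esymF_relations_eq (hX : Disjoint X₁ X₂)
    (hY : Disjoint Y₁ Y₂) (hY₁A : Disjoint Y₁ A) (hX₂A : Disjoint X₂ A)
    (h₁ : (Y₁ ∪ A).card ≤ X₁.card) (h₂ : (X₂ ∪ A).card ≤ Y₂.card) (k : ℕ) :
    Ideal.span
        ({f | ∃ a : ℕ, 1 ≤ a ∧ a ≤ X₁.card ∧ f = esymF (Y₁ ∪ A) a - esymF X₁ a} ∪
          {f | ∃ b : ℕ, 1 ≤ b ∧ b ≤ Y₂.card ∧ f = esymF Y₂ b - esymF (X₂ ∪ A) b}) =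
      Ideal.span
        ({f | ∃ a : ℕ, 1 ≤ a ∧ a ≤ k ∧ f = esymF (X₁ ∪ X₂) a - esymF (Y₁ ∪ Y₂) a} ∪
          {f | ∃ a : ℕ, k < a ∧ a ≤ X₁.card ∧ f = esymF (Y₁ ∪ A) a - esymF X₁ a} ∪
          {f | ∃ b : ℕ, 1 ≤ b ∧ b ≤ Y₂.card ∧ f = esymF Y₂ b - esymF (X₂ ∪ A) b}) := by
  refine le_antisymm (Ideal.span_le.2 ?_) (Ideal.span_le.2 ?_)
  · rintro f (⟨a, -, -, rfl⟩ | ⟨b, hb1, hb, rfl⟩)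
    · exact esymF_sub_mem_of_low_degree hX hY hY₁A hX₂A h₁ h₂ k
        (fun a ha1 ha => Ideal.subset_span (Or.inl (Or.inl ⟨a, ha1, ha, rfl⟩)))
        (fun a ha1 ha => Ideal.subset_span (Or.inl (Or.inr ⟨a, ha1, ha, rfl⟩)))
        (fun b hb1 hb => Ideal.subset_span (Or.inr ⟨b, hb1, hb, rfl⟩)) a
    · exact Ideal.subset_span (Or.inr ⟨b, hb1, hb, rfl⟩)
  · rintro f ((⟨a, -, -, rfl⟩ | ⟨a, ha1, ha, rfl⟩) | ⟨b, hb1, hb, rfl⟩)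
    · exact esymF_union_sub_mem hX hY hY₁A hX₂A h₁ h₂
        (fun a ha1 ha => Ideal.subset_span (Or.inl ⟨a, ha1, ha, rfl⟩))
        (fun b hb1 hb => Ideal.subset_span (Or.inr ⟨b, hb1, hb, rfl⟩)) a
    · exact Ideal.subset_span (Or.inl ⟨a, by omega, ha, rfl⟩)
    · exact Ideal.subset_span (Or.inr ⟨b, hb1, hb, rfl⟩)

end ElementarySymmetric

theorem card_image_univ_fin {α : Type*} [DecidableEq α] {n : ℕ} {f : Fin n → α}
    (hf : Function.Injective f) : (Finset.univ.image f).card = n := by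
  rw [Finset.card_image_of_injective _ hf, Finset.card_univ, Fintype.card_fin]

section Alphabets

variable {n1 n2 m1 m2 c : ℕ}

theorem card_FX1 : (FX1 n1 n2 m1 m2 c).card = n1 :=
  card_image_univ_fin Sum.inl_injective

theorem card_FX2 : (FX2 n1 n2 m1 m2 c).card = n2 :=
  card_image_univ_fin fun _ _ h => by simpa using h

theorem card_FY1 : (FY1 n1 n2 m1 m2 c).card = m1 :=
  card_image_univ_fin fun _ _ h => by simpa using h

theorem card_FY2 : (FY2 n1 n2 m1 m2 c).card = m2 :=
  card_image_univ_fin fun _ _ h => by simpa using h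

theorem card_FA : (FA n1 n2 m1 m2 c).card = c :=
  card_image_univ_fin fun _ _ h => by simpa using h

theorem disjoint_FX1_FX2 : Disjoint (FX1 n1 n2 m1 m2 c) (FX2 n1 n2 m1 m2 c) := by
  simp [Finset.disjoint_left, FX1, FX2]

theorem disjoint_FY1_FY2 : Disjoint (FY1 n1 n2 m1 m2 c) (FY2 n1 n2 m1 m2 c) := by
  simp [Finset.disjoint_left, FY1, FY2]

theorem disjoint_FY1_FA : Disjoint (FY1 n1 n2 m1 m2 c) (FA n1 n2 m1 m2 c) := by
  simp [Finset.disjoint_left, FY1, FA]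

theorem disjoint_FX2_FA : Disjoint (FX2 n1 n2 m1 m2 c) (FA n1 n2 m1 m2 c) := by
  simp [Finset.disjoint_left, FX2, FA]

end Alphabets

theorem statement10_general (n1 n2 m1 m2 c : ℕ) (h1 : n1 = m1 + c) (h2 : m2 = n2 + c)
    (k : ℕ) :
    Ideal.span
        ({f | ∃ a : ℕ, 1 ≤ a ∧ a ≤ n1 ∧
            f = esymF (FY1 n1 n2 m1 m2 c ∪ FA n1 n2 m1 m2 c) a - esymF (FX1 n1 n2 m1 m2 c) a} ∪
          {f | ∃ b : ℕ, 1 ≤ b ∧ b ≤ m2 ∧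
            f = esymF (FY2 n1 n2 m1 m2 c) b -
              esymF (FX2 n1 n2 m1 m2 c ∪ FA n1 n2 m1 m2 c) b}) =
      Ideal.span
        ({f | ∃ a : ℕ, 1 ≤ a ∧ a ≤ k ∧
            f = esymF (FX1 n1 n2 m1 m2 c ∪ FX2 n1 n2 m1 m2 c) a -
              esymF (FY1 n1 n2 m1 m2 c ∪ FY2 n1 n2 m1 m2 c) a} ∪
          {f | ∃ a : ℕ, k < a ∧ a ≤ n1 ∧
            f = esymF (FY1 n1 n2 m1 m2 c ∪ FA n1 n2 m1 m2 c) a - esymF (FX1 n1 n2 m1 m2 c) a} ∪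
          {f | ∃ b : ℕ, 1 ≤ b ∧ b ≤ m2 ∧
            f = esymF (FY2 n1 n2 m1 m2 c) b -
              esymF (FX2 n1 n2 m1 m2 c ∪ FA n1 n2 m1 m2 c) b}) := by
  have h₁ : (FY1 n1 n2 m1 m2 c ∪ FA n1 n2 m1 m2 c).card ≤ (FX1 n1 n2 m1 m2 c).card :=
    (Finset.card_union_le _ _).trans (by rw [card_FY1, card_FA, card_FX1, h1])
  have h₂ : (FX2 n1 n2 m1 m2 c ∪ FA n1 n2 m1 m2 c).card ≤ (FY2 n1 n2 m1 m2 c).card :=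
    (Finset.card_union_le _ _).trans (by rw [card_FX2, card_FA, card_FY2, h2])
  simpa only [card_FX1, card_FY2] using span_esymF_relations_eq disjoint_FX1_FX2
    disjoint_FY1_FY2 disjoint_FY1_FA disjoint_FX2_FA h₁ h₂ k

/-- With `|X_1| = |Y_1| + |A|`, `|Y_2| = |X_2| + |A|` and `1 ≤ k ≤ |X_1|`,
the ideal generated by `{e_a(Y_1 ⊔ A) − e_a(X_1) : 1 ≤ a ≤ |X_1|}` together with
`{e_b(Y_2) − e_b(X_2 ⊔ A) : 1 ≤ b ≤ |Y_2|}` is equal to the ideal generated by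
`{e_a(X_1 ⊔ X_2) − e_a(Y_1 ⊔ Y_2) : 1 ≤ a ≤ k}`, `{e_a(Y_1 ⊔ A) − e_a(X_1) : k < a ≤ |X_1|}`
and `{e_b(Y_2) − e_b(X_2 ⊔ A) : 1 ≤ b ≤ |Y_2|}`. -/
theorem statement10 (n1 n2 m1 m2 c : ℕ) (h1 : n1 = m1 + c) (h2 : m2 = n2 + c)
    (k : ℕ) (hk1 : 1 ≤ k) (hkn : k ≤ n1) :
    Ideal.span
        ({f | ∃ a : ℕ, 1 ≤ a ∧ a ≤ n1 ∧
            f = esymF (FY1 n1 n2 m1 m2 c ∪ FA n1 n2 m1 m2 c) a - esymF (FX1 n1 n2 m1 m2 c) a} ∪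
          {f | ∃ b : ℕ, 1 ≤ b ∧ b ≤ m2 ∧
            f = esymF (FY2 n1 n2 m1 m2 c) b -
              esymF (FX2 n1 n2 m1 m2 c ∪ FA n1 n2 m1 m2 c) b}) =
      Ideal.span
        ({f | ∃ a : ℕ, 1 ≤ a ∧ a ≤ k ∧
            f = esymF (FX1 n1 n2 m1 m2 c ∪ FX2 n1 n2 m1 m2 c) a -
              esymF (FY1 n1 n2 m1 m2 c ∪ FY2 n1 n2 m1 m2 c) a} ∪
          {f | ∃ a : ℕ, k < a ∧ a ≤ n1 ∧
            f = esymF (FY1 n1 n2 m1 m2 c ∪ FA n1 n2 m1 m2 c) a - esymF (FX1 n1 n2 m1 m2 c) a} ∪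
          {f | ∃ b : ℕ, 1 ≤ b ∧ b ≤ m2 ∧
            f = esymF (FY2 n1 n2 m1 m2 c) b -
              esymF (FX2 n1 n2 m1 m2 c ∪ FA n1 n2 m1 m2 c) b}) :=
  statement10_general n1 n2 m1 m2 c h1 h2 k
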